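/- Let (Ω, 𝔉, P) be a probability space with filtration (𝔉_T)_{T∈ℕ}, k ≥ 1, m ∈ {1,…,k}, and real parameters θ_1,…,θ_k. For each i ∈ {1,…,k} and α ∈ (0,1), let (L_{iT}(α))_{T∈ℕ} and (U_{iT}(α))_{T∈ℕ} be (𝔉_T)-adapted real processes satisfying the anytime-valid coverage property P(∃T ∈ ℕ : θ_i ≤ L_{iT}(α)) ≤ α and P(∃T ∈ ℕ : θ_i ≥ U_{iT}(α)) ≤ α. Let τ be any stopping time with respect to (𝔉_T) and let Ŝ_τ be any 𝔉_τ-measurable random subset of {1,…,k} with |Ŝ_τ| ≥ m almost surely. Set α^B = mα/(2k). Then the stopped false coverage rate sFCR(α^B) = E[ Σ_{i∈Ŝ_τ} 𝟙{θ_i ∉ (L_{iτ}(α^B), U_{iτ}(α^B))} / |Ŝ_τ| ] satisfies sFCR(α^B) ≤ α. -/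

import Mathlib

/-!
Since `Ŝ_τ` has at least `m` elements, the false coverage proportion is at most `1/m` times the
number of all `k` intervals that miss their parameter at time `τ`. An interval misses at `τ` only
if one of its bounds crosses `θ_i` at some time, which by anytime validity has probability at most
`2α^B`. Hence `sFCR(α^B) ≤ k · 2α^B / m = α`.
-/

open MeasureTheory Finset
open scoped ENNReal

section

variable {Ω ι : Type*} [MeasurableSpace Ω] (μ : Measure Ω)

theorem lintegral_sum_indicator_one_le (s : Finset ι) (A : ι → Set Ω) :
    ∫⁻ ω, ∑ i ∈ s, (A i).indicator 1 ω ∂μ ≤ ∑ i ∈ s, μ (A i) :=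
  calc ∫⁻ ω, ∑ i ∈ s, (A i).indicator 1 ω ∂μ
      ≤ ∫⁻ ω, ∑ i ∈ s, (toMeasurable μ (A i)).indicator 1 ω ∂μ :=
        lintegral_mono fun ω => sum_le_sum fun i _ =>
          Set.indicator_le_indicator_of_subset (subset_toMeasurable μ (A i)) (fun _ => zero_le) ω
    _ = ∑ i ∈ s, μ (A i) := by
        rw [lintegral_finsetSum _ fun i _ =>
          measurable_one.indicator (measurableSet_toMeasurable μ _)]
        simp only [lintegral_indicator_one (measurableSet_toMeasurable μ _), measure_toMeasurable]

theorem ofReal_sum_boole_div_card_le [Fintype ι] (p : ι → Prop) [DecidablePred p]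
    (S : Finset ι) {m : ℕ} (hm : 0 < m) (hmS : m ≤ #S) :
    ENNReal.ofReal ((∑ i ∈ S, if p i then (1 : ℝ) else 0) / #S) ≤ (m : ℝ≥0∞)⁻¹ * #{i | p i} := by
  rw [sum_boole, ENNReal.ofReal_div_of_pos (by exact_mod_cast hm.trans_le hmS),
    ENNReal.ofReal_natCast, ENNReal.ofReal_natCast, ← ENNReal.div_eq_inv_mul]
  exact ENNReal.div_le_div (by exact_mod_cast card_le_card (filter_subset_filter p (subset_univ S)))
    (by exact_mod_cast hmS)

theorem lintegral_proportion_le_inv_mul_sum_measure [Fintype ι] (p : ι → Ω → Prop)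
    [∀ i ω, Decidable (p i ω)] (S : Ω → Finset ι) {m : ℕ} (hm : 0 < m) (hS : ∀ᵐ ω ∂μ, m ≤ #(S ω)) :
    ∫⁻ ω, ENNReal.ofReal ((∑ i ∈ S ω, if p i ω then (1 : ℝ) else 0) / #(S ω)) ∂μ ≤
      (m : ℝ≥0∞)⁻¹ * ∑ i, μ {ω | p i ω} := by
  have hcount (ω : Ω) : (#{i | p i ω} : ℝ≥0∞) = ∑ i, {ω | p i ω}.indicator 1 ω := by
    simp only [natCast_card_filter, Set.indicator_apply, Set.mem_ofPred_eq, Pi.one_apply]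
  calc _ ≤ ∫⁻ ω, (m : ℝ≥0∞)⁻¹ * ∑ i, {ω | p i ω}.indicator 1 ω ∂μ := by
        refine lintegral_mono_ae (hS.mono fun ω hmS => ?_)
        rw [← hcount]
        exact ofReal_sum_boole_div_card_le (p · ω) (S ω) hm hmS
    _ ≤ (m : ℝ≥0∞)⁻¹ * ∑ i, μ {ω | p i ω} := by
        rw [lintegral_const_mul' _ _ (ENNReal.inv_ne_top.2 (by exact_mod_cast hm.ne'))]
        exact mul_le_mul_right (lintegral_sum_indicator_one_le μ _ _) _

theorem measure_miscoverage_at_le (θ : ℝ) (L U : ℕ → Ω → ℝ) (τ : Ω → ℕ) (hτ : ∀ ω, 1 ≤ τ ω) :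
    μ {ω | θ ≤ L (τ ω) ω ∨ U (τ ω) ω ≤ θ} ≤
      μ {ω | ∃ T, 1 ≤ T ∧ θ ≤ L T ω} + μ {ω | ∃ T, 1 ≤ T ∧ U T ω ≤ θ} :=
  (measure_mono fun ω hω => hω.imp (⟨τ ω, hτ ω, ·⟩) (⟨τ ω, hτ ω, ·⟩)).trans (measure_union_le _ _)

end

theorem bonferroni_psi_sfcr_control_general
    {Ω : Type*} {m0 : MeasurableSpace Ω} (P : Measure Ω)
    (k m : ℕ) (hm1 : 1 ≤ m) (hmk : m ≤ k)
    (θ : Fin k → ℝ)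
    (L U : Fin k → ℝ → ℕ → Ω → ℝ)
    (hLcov : ∀ i (a : ℝ), a ∈ Set.Ioo (0 : ℝ) 1 →
      P {ω | ∃ T : ℕ, 1 ≤ T ∧ θ i ≤ L i a T ω} ≤ ENNReal.ofReal a)
    (hUcov : ∀ i (a : ℝ), a ∈ Set.Ioo (0 : ℝ) 1 →
      P {ω | ∃ T : ℕ, 1 ≤ T ∧ U i a T ω ≤ θ i} ≤ ENNReal.ofReal a)
    (α : ℝ) (hα : α ∈ Set.Ioo (0 : ℝ) 1)
    (τ : Ω → ℕ) (hτ1 : ∀ ω, 1 ≤ τ ω)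
    (S : Ω → Finset (Fin k))
    (hScard : ∀ᵐ ω ∂P, m ≤ (S ω).card) :
    -- sFCR(α^B) ≤ α, where α^B = mα/(2k)
    (∫⁻ ω, ENNReal.ofReal
        ((∑ i ∈ S ω,
          (if θ i ≤ L i (m * α / (2 * k)) (τ ω) ω ∨
              U i (m * α / (2 * k)) (τ ω) ω ≤ θ i then (1 : ℝ) else 0)) /
          (S ω).card) ∂P) ≤ ENNReal.ofReal α := by
  set a : ℝ := m * α / (2 * k) with ha_def
  have hm : (0 : ℝ) < m := by exact_mod_cast hm1
  have hk : (0 : ℝ) < k := by exact_mod_cast hm1.trans hmk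
  have ha : a ∈ Set.Ioo (0 : ℝ) 1 := by
    obtain ⟨hα0, hα1⟩ := hα
    have : (m : ℝ) * α ≤ k * α := by gcongr
    exact ⟨by positivity, by rw [ha_def, div_lt_one (by positivity)]; nlinarith⟩
  have hmiss (i : Fin k) :
      P {ω | θ i ≤ L i a (τ ω) ω ∨ U i a (τ ω) ω ≤ θ i} ≤ 2 * ENNReal.ofReal a :=
    (measure_miscoverage_at_le P _ _ _ τ hτ1).trans
      ((add_le_add (hLcov i a ha) (hUcov i a ha)).trans_eq (two_mul _).symm)
  calc _ ≤ (m : ℝ≥0∞)⁻¹ * ∑ i, P {ω | θ i ≤ L i a (τ ω) ω ∨ U i a (τ ω) ω ≤ θ i} :=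
        lintegral_proportion_le_inv_mul_sum_measure P _ S hm1 hScard
    _ ≤ (m : ℝ≥0∞)⁻¹ * ∑ _ : Fin k, 2 * ENNReal.ofReal a := by gcongr with i; exact hmiss i
    _ = ENNReal.ofReal α := by
        rw [sum_const, card_univ, Fintype.card_fin, nsmul_eq_mul, ← ENNReal.ofReal_natCast,
          ← ENNReal.ofReal_natCast, ← ENNReal.ofReal_inv_of_pos hm, ← ENNReal.ofReal_ofNat 2,
          ← ENNReal.ofReal_mul (by positivity), ← ENNReal.ofReal_mul (by positivity),
          ← ENNReal.ofReal_mul (by positivity)]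
        congr 1
        rw [ha_def]
        field_simp

/-- Theorem 3: sFCR control of Bonferroni post-screening inference at level `α^B = mα/(2k)`,
assuming only the anytime-valid coverage property of the confidence bounds. -/
theorem bonferroni_psi_sfcr_control
    {Ω : Type*} {m0 : MeasurableSpace Ω} (P : Measure Ω) [IsProbabilityMeasure P]
    (ℱ : Filtration ℕ m0)
    (k m : ℕ) (hk : 1 ≤ k) (hm1 : 1 ≤ m) (hmk : m ≤ k)
    (θ : Fin k → ℝ)
    (L U : Fin k → ℝ → ℕ → Ω → ℝ)
    (hLadapted : ∀ i (a : ℝ), a ∈ Set.Ioo (0 : ℝ) 1 → Adapted ℱ (L i a))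
    (hUadapted : ∀ i (a : ℝ), a ∈ Set.Ioo (0 : ℝ) 1 → Adapted ℱ (U i a))
    (hLcov : ∀ i (a : ℝ), a ∈ Set.Ioo (0 : ℝ) 1 →
      P {ω | ∃ T : ℕ, 1 ≤ T ∧ θ i ≤ L i a T ω} ≤ ENNReal.ofReal a)
    (hUcov : ∀ i (a : ℝ), a ∈ Set.Ioo (0 : ℝ) 1 →
      P {ω | ∃ T : ℕ, 1 ≤ T ∧ U i a T ω ≤ θ i} ≤ ENNReal.ofReal a)
    (α : ℝ) (hα : α ∈ Set.Ioo (0 : ℝ) 1)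
    (τ : Ω → ℕ) (hτ : IsStoppingTime ℱ (fun ω => (τ ω : WithTop ℕ))) (hτ1 : ∀ ω, 1 ≤ τ ω)
    (S : Ω → Finset (Fin k))
    (hScard : ∀ᵐ ω ∂P, m ≤ (S ω).card)
    (hSmeas : ∀ s : Finset (Fin k), MeasurableSet[hτ.measurableSpace] {ω | S ω = s}) :
    -- sFCR(α^B) ≤ α, where α^B = mα/(2k)
    (∫⁻ ω, ENNReal.ofReal
        ((∑ i ∈ S ω,
          (if θ i ≤ L i (m * α / (2 * k)) (τ ω) ω ∨
              U i (m * α / (2 * k)) (τ ω) ω ≤ θ i then (1 : ℝ) else 0)) /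
          (S ω).card) ∂P) ≤ ENNReal.ofReal α :=
  bonferroni_psi_sfcr_control_general (m0 := m0) P k m hm1 hmk θ L U hLcov hUcov α hα τ hτ1 S hScard
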